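/- Let K be a field of characteristic zero, let q ∈ K[X] be nonzero with deg(q) ≤ d, let 1 ≤ k < n, and let M = ((C, 0), (α, β)) ∈ M_n(K(X)) be a matrix in Shape (I): C a companion matrix of dimension k, α an (n−k)×k block, β an (n−k)×(n−k) block, and qM has polynomial entries of degree at most d. Define Γ on column vectors by Γ(v) = βv − v′, and define the (n−k)×k matrix A by prescribing its a-th column as Col_a(A) = − Σ_{i=1}^{k−a} Γ^{i−1}(Col_{a+i}(α)) for 1 ≤ a ≤ k (so Col_k(A) = 0). Let P = ((I_k, 0), (A, I_{n−k})). Then: (1) q^{k−1}·A has polynomial entries of degree at most (k−1)d; (2) q^k·P[M] has polynomial entries of degree at most k·d, where P[M] = (PM + P′)P⁻¹; (3) P[M] = ((C, 0), (AC + α − Γ(A), β)) and the columns 2, ..., k of the lower-left block AC + α − Γ(A) are zero, so P[M] is in Shape (II). -/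

import Mathlib

/-!
Conjugating by `P = ((I, 0), (A, I))` changes only the lower-left block, into `A C + α - Γ(A)`.
As `C` is companion and the last column of `A` vanishes, column `a` of `A C` is column `a - 1`
of `A`, and the sum defining `A` obeys `Col_{a-1}(A) = Γ(Col_a(A)) - Col_a(α)`; so columns
`1, …, k-1` of the new block vanish.

For the degree bounds, let `F_m` be the additive group of `f` with `q^m f` a polynomial of degree
`≤ m d`. Then `F_m F_{m'} ⊆ F_{m+m'}` and `f ∈ F_m` implies `f' ∈ F_{m+1}`, so `Γ` maps
`F_m`-vectors to `F_{m+1}`-vectors, `Γ^i(Col_j(α)) ∈ F_{i+1}`, and hence `A ∈ F_{k-1}` and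
`P[M] ∈ F_k`.
-/

/-- The operator `Γ` on column vectors: `Γ(v) = β v − v′`, the derivation `der`
being applied entrywise. -/
def cvGamma {F : Type*} [Field F] {m : ℕ} (der : F → F)
    (β : Matrix (Fin m) (Fin m) F) (v : Fin m → F) : Fin m → F :=
  β.mulVec v - fun i => der (v i)

/-- A `k × k` matrix is companion if its rows `1, …, k−1` are the standard
basis rows `e_2, …, e_k` (its last row being arbitrary). -/
def IsCompanionMat {F : Type*} [Field F] {k : ℕ} (C : Matrix (Fin k) (Fin k) F) : Prop :=
  ∀ i j : Fin k, (i : ℕ) + 1 < k → C i j = if (j : ℕ) = (i : ℕ) + 1 then 1 else 0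

/-- The block lower-unitriangular matrix `((I, 0), (A, I))`. -/
def blkUnitriang {F : Type*} [Field F] {k m : ℕ}
    (A : Matrix (Fin m) (Fin k) F) :
    Matrix (Fin k ⊕ Fin m) (Fin k ⊕ Fin m) F :=
  Matrix.fromBlocks 1 0 A 1

open Polynomial Finset

section Derivations

variable {R B : Type*} [CommRing R] [CommRing B] [Algebra R B]

theorem Derivation.mul_apply_pow (D : Derivation R B B) (a : B) (n : ℕ) :
    a * D (a ^ n) = n * a ^ n * D a := by
  induction n with
  | zero => simp
  | succ n ih =>
    rw [pow_succ, D.leibniz, smul_eq_mul, smul_eq_mul, mul_add, ← mul_assoc, mul_comm a (a ^ n),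
      mul_assoc (a ^ n), ih]
    push_cast
    ring

theorem Derivation.apply_algebraMap_polynomial [Algebra R[X] B] [IsScalarTower R R[X] B]
    (D : Derivation R B B)
    (hX : D (algebraMap R[X] B X) = 1) (p : R[X]) :
    D (algebraMap R[X] B p) = algebraMap R[X] B (derivative p) := by
  have h : D.compAlgebraMap R[X] = mkDerivation R 1 :=
    derivation_ext (by simpa using hX)
  simpa [mkDerivation_apply, Algebra.smul_def] using DFunLike.congr_fun h p

end Derivations

noncomputable def RatFunc.derivationOfLeibniz {K : Type*} [Field K] (der : RatFunc K → RatFunc K)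
    (h_add : ∀ a b, der (a + b) = der a + der b)
    (h_mul : ∀ a b, der (a * b) = a * der b + der a * b)
    (h_C : ∀ c : K, der (RatFunc.C c) = 0) : Derivation K (RatFunc K) (RatFunc K) :=
  Derivation.mk'
    { toFun := der
      map_add' := h_add
      map_smul' := fun c f => by
        simp only [RatFunc.smul_eq_C_mul, h_mul, h_C, zero_mul, add_zero, RingHom.id_apply] }
    (fun a b => by simp only [LinearMap.coe_mk, AddHom.coe_mk, h_mul, smul_eq_mul]; ring)

section Filtration

variable {K : Type*} [Field K] (q : K[X]) (d : ℕ)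

def qFiltration (m : ℕ) : AddSubgroup (RatFunc K) where
  carrier := {f | ∃ p : K[X], p.degree ≤ ((m * d : ℕ) : WithBot ℕ) ∧
    algebraMap K[X] (RatFunc K) q ^ m * f = algebraMap K[X] (RatFunc K) p}
  zero_mem' := ⟨0, by simp, by simp⟩
  add_mem' := by
    rintro f g ⟨p, hp, hpf⟩ ⟨r, hr, hrg⟩
    exact ⟨p + r, (degree_add_le _ _).trans (max_le hp hr), by rw [mul_add, hpf, hrg, map_add]⟩
  neg_mem' := by
    rintro f ⟨p, hp, hpf⟩
    exact ⟨-p, by rwa [degree_neg], by rw [mul_neg, hpf, map_neg]⟩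

variable {q d}

theorem mem_qFiltration_one {f : RatFunc K} :
    f ∈ qFiltration q d 1 ↔ ∃ p : K[X], p.degree ≤ (d : WithBot ℕ) ∧
      algebraMap K[X] (RatFunc K) q * f = algebraMap K[X] (RatFunc K) p := by
  simp [qFiltration]

theorem mul_mem_qFiltration {m₁ m₂ : ℕ} {f g : RatFunc K} (hf : f ∈ qFiltration q d m₁)
    (hg : g ∈ qFiltration q d m₂) : f * g ∈ qFiltration q d (m₁ + m₂) := by
  obtain ⟨p, hp, hpf⟩ := hf
  obtain ⟨r, hr, hrg⟩ := hg
  refine ⟨p * r, (degree_mul_le _ _).trans ?_, ?_⟩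
  · rw [add_mul, Nat.cast_add]
    exact add_le_add hp hr
  · rw [map_mul, ← hpf, ← hrg]
    ring

variable (hqd : q.degree ≤ (d : WithBot ℕ))
include hqd

theorem qFiltration_mono : Monotone (qFiltration q d) := by
  refine monotone_nat_of_le_succ fun m f ⟨p, hp, hpf⟩ => ⟨p * q, ?_, ?_⟩
  · refine (degree_mul_le _ _).trans ?_
    rw [add_mul, one_mul, Nat.cast_add]
    exact add_le_add hp hqd
  · rw [pow_succ, map_mul, ← hpf]
    ring

-- If `q ^ m * f = p` then `q ^ (m + 1) * f' = q * p' - m * q' * p`.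
theorem Derivation.apply_mem_qFiltration (D : Derivation K (RatFunc K) (RatFunc K))
    (hX : D RatFunc.X = 1) {m : ℕ} {f : RatFunc K} (hf : f ∈ qFiltration q d m) :
    D f ∈ qFiltration q d (m + 1) := by
  obtain ⟨p, hp, hpf⟩ := hf
  have hX' : D (algebraMap K[X] (RatFunc K) X) = 1 := by rwa [RatFunc.algebraMap_X]
  have hD := congrArg D hpf
  rw [D.leibniz, D.apply_algebraMap_polynomial hX', smul_eq_mul, smul_eq_mul] at hD
  have hpow := D.mul_apply_pow (algebraMap K[X] (RatFunc K) q) m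
  rw [D.apply_algebraMap_polynomial hX'] at hpow
  refine ⟨q * derivative p - m * (derivative q * p), ?_, ?_⟩
  · have hdq : (derivative q * p).degree ≤ ((m * d + d : ℕ) : WithBot ℕ) := by
      rw [Nat.cast_add, add_comm]
      exact (degree_mul_le _ _).trans (add_le_add (degree_derivative_le.trans hqd) hp)
    refine (degree_sub_le _ _).trans (max_le ?_ ?_)
    · rw [add_mul, one_mul, Nat.cast_add, add_comm]
      exact (degree_mul_le _ _).trans (add_le_add hqd (degree_derivative_le.trans hp))
    · rw [add_mul, one_mul]
      refine (degree_mul_le _ _).trans ?_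
      simpa using add_le_add (degree_natCast_le m) hdq
  · rw [map_sub, map_mul, map_mul, map_mul, _root_.map_natCast, pow_succ, ← hpf]
    linear_combination algebraMap K[X] (RatFunc K) q * hD - f * hpow

end Filtration

section GaugeTransform

variable {R F : Type*} [CommRing R] [Field F] [Algebra R F] {m k : ℕ}

def cvGammaHom (D : Derivation R F F) (β : Matrix (Fin m) (Fin m) F) :
    (Fin m → F) →+ (Fin m → F) where
  toFun := cvGamma D β
  map_zero' := by ext; simp [cvGamma]
  map_add' u v := by
    ext
    simp only [cvGamma, Matrix.mulVec_add, Pi.add_apply, Pi.sub_apply, map_add]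
    abel

theorem coe_cvGammaHom (D : Derivation R F F) (β : Matrix (Fin m) (Fin m) F) :
    ⇑(cvGammaHom D β) = cvGamma D β := rfl

theorem cvGamma_col (D : Derivation R F F) (β : Matrix (Fin m) (Fin m) F)
    (A : Matrix (Fin m) (Fin k) F) (a : Fin k) :
    cvGamma D β (fun r => A r a) = fun r => (β * A - A.map D) r a := by
  ext r
  simp [cvGamma, Matrix.mul_apply, Matrix.mulVec, dotProduct]

theorem blkUnitriang_inv (A : Matrix (Fin m) (Fin k) F) :
    (blkUnitriang A)⁻¹ = blkUnitriang (-A) := by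
  refine Matrix.inv_eq_right_inv ?_
  simp [blkUnitriang, Matrix.fromBlocks_multiply, ← Matrix.fromBlocks_one]

theorem blkUnitriang_map_derivation (D : Derivation R F F) (A : Matrix (Fin m) (Fin k) F) :
    (blkUnitriang A).map D = Matrix.fromBlocks 0 0 (A.map D) 0 := by
  have h1 : ∀ n, (1 : Matrix (Fin n) (Fin n) F).map D = 0 := fun n => by
    ext i j
    by_cases h : i = j <;> simp [h]
  simp [blkUnitriang, Matrix.fromBlocks_map, h1]

theorem blkUnitriang_gauge (D : Derivation R F F) (A : Matrix (Fin m) (Fin k) F)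
    (C : Matrix (Fin k) (Fin k) F) (α : Matrix (Fin m) (Fin k) F) (β : Matrix (Fin m) (Fin m) F) :
    (blkUnitriang A * Matrix.fromBlocks C 0 α β + (blkUnitriang A).map D) * (blkUnitriang A)⁻¹
      = Matrix.fromBlocks C 0 (A * C + α - (β * A - A.map D)) β := by
  rw [blkUnitriang_inv, blkUnitriang_map_derivation, blkUnitriang, blkUnitriang,
    Matrix.fromBlocks_multiply, Matrix.fromBlocks_add, Matrix.fromBlocks_multiply]
  refine Matrix.fromBlocks_inj.2 ⟨by simp, by simp, ?_, by simp⟩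
  simp only [Matrix.one_mul, Matrix.mul_one, Matrix.mul_zero, Matrix.mul_neg,
    add_zero, zero_add]
  abel

end GaugeTransform

theorem sum_range_succ_iterate {G : Type*} [AddCommMonoid G] (Γ : G →+ G) (w : ℕ → G)
    (b n : ℕ) :
    ∑ i ∈ range (n + 1), Γ^[i] (w (b + i))
      = w b + Γ (∑ i ∈ range n, Γ^[i] (w (b + 1 + i))) := by
  rw [sum_range_succ', map_sum, add_comm, add_zero, Function.iterate_zero_apply]
  congr 1
  refine sum_congr rfl fun i _ => ?_
  rw [Function.iterate_succ_apply', Nat.add_right_comm, add_assoc]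

theorem IsCompanionMat.mul_apply_of_pos {F : Type*} [Field F] {m k : ℕ}
    {C : Matrix (Fin k) (Fin k) F} (hC : IsCompanionMat C) {A : Matrix (Fin m) (Fin k) F}
    (hlast : ∀ r (b : Fin k), (b : ℕ) + 1 = k → A r b = 0) (r : Fin m) (a : Fin k)
    (ha : 1 ≤ (a : ℕ)) : (A * C) r a = A r ⟨a - 1, by omega⟩ := by
  rw [Matrix.mul_apply, sum_eq_single ⟨a - 1, by omega⟩]
  · rw [hC _ _ (by simp only; omega), if_pos (by simp only; omega), mul_one]
  · intro b _ hb
    by_cases hbk : (b : ℕ) + 1 < k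
    · rw [hC b a hbk, if_neg (fun h => hb (Fin.ext (by simp only; omega))), mul_zero]
    · rw [hlast r b (by omega), zero_mul]
  · simp

def padCol {F : Type*} [Zero F] {m k : ℕ} (α : Matrix (Fin m) (Fin k) F) (j : ℕ) :
    Fin m → F :=
  if h : j < k then fun r => α r ⟨j, h⟩ else 0

theorem padCol_of_lt {F : Type*} [Zero F] {m k : ℕ} (α : Matrix (Fin m) (Fin k) F) {j : ℕ}
    (h : j < k) : padCol α j = fun r => α r ⟨j, h⟩ :=
  dif_pos h

theorem sum_fin_iterate_col_eq_sum_range {F : Type*} [AddCommMonoid F] {m k : ℕ}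
    (Γ : (Fin m → F) → Fin m → F) (α : Matrix (Fin m) (Fin k) F) (a : Fin k)
    (r : Fin m) :
    ∑ i : Fin (k - 1 - (a : ℕ)), Γ^[(i : ℕ)]
        (fun r' => α r' ⟨(a : ℕ) + 1 + (i : ℕ), by have := i.isLt; omega⟩) r
      = ∑ i ∈ range (k - 1 - (a : ℕ)), Γ^[i] (padCol α (a + 1 + i)) r := by
  rw [← Fin.sum_univ_eq_sum_range (fun i => Γ^[i] (padCol α (a + 1 + i)) r)]
  refine sum_congr rfl fun i _ => ?_
  rw [padCol_of_lt α (by omega)]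

theorem lowerLeft_col_eq_zero {R F : Type*} [CommRing R] [Field F] [Algebra R F] {m k : ℕ}
    (D : Derivation R F F) {C : Matrix (Fin k) (Fin k) F} (hC : IsCompanionMat C)
    {α A : Matrix (Fin m) (Fin k) F} {β : Matrix (Fin m) (Fin m) F}
    (hA : ∀ r (a : Fin k),
      A r a = -∑ i ∈ range (k - 1 - (a : ℕ)), (cvGamma D β)^[i] (padCol α (a + 1 + i)) r)
    (r : Fin m) (a : Fin k) (ha : 1 ≤ (a : ℕ)) :
    (A * C + α - (β * A - A.map D)) r a = 0 := by
  have hlast : ∀ r (b : Fin k), (b : ℕ) + 1 = k → A r b = 0 := fun r b hb => by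
    rw [hA, show k - 1 - (b : ℕ) = 0 by omega, sum_range_zero, neg_zero]
  have hcol : (fun r => A r a)
      = -∑ i ∈ range (k - 1 - (a : ℕ)), (cvGammaHom D β)^[i] (padCol α (a + 1 + i)) := by
    ext r
    simp [hA, coe_cvGammaHom]
  -- Peel off the summand `i = 0` of the sum defining column `a - 1`.
  have hprev : A r ⟨a - 1, by omega⟩ = cvGamma D β (fun r => A r a) r - α r a := by
    have hsum := sum_range_succ_iterate (cvGammaHom D β) (padCol α) a (k - 1 - a)
    rw [show k - 1 - (a : ℕ) + 1 = k - 1 - (a - 1) by omega, padCol_of_lt α a.isLt] at hsum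
    rw [hA, ← coe_cvGammaHom, hcol, Fin.val_mk, show (a : ℕ) - 1 + 1 = a by omega,
      ← Finset.sum_apply, hsum, map_neg]
    simp only [Pi.add_apply, Pi.neg_apply]
    ring
  rw [Matrix.sub_apply, Matrix.add_apply, hC.mul_apply_of_pos hlast r a ha, hprev, cvGamma_col]
  ring

section EntryBounds

variable {K : Type*} [Field K] {q : K[X]} {d : ℕ}

theorem Matrix.mul_apply_mem_qFiltration {l n o : Type*} [Fintype n]
    {X : Matrix l n (RatFunc K)} {Y : Matrix n o (RatFunc K)} {m₁ m₂ : ℕ}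
    (hX : ∀ i j, X i j ∈ qFiltration q d m₁) (hY : ∀ i j, Y i j ∈ qFiltration q d m₂)
    (i : l) (j : o) : (X * Y) i j ∈ qFiltration q d (m₁ + m₂) := by
  rw [Matrix.mul_apply]
  exact sum_mem fun b _ => mul_mem_qFiltration (hX i b) (hY b j)

variable (hqd : q.degree ≤ (d : WithBot ℕ)) (D : Derivation K (RatFunc K) (RatFunc K))
  (hX : D RatFunc.X = 1)
include hqd hX

theorem iterate_cvGamma_mem_qFiltration {m : ℕ} {β : Matrix (Fin m) (Fin m) (RatFunc K)}
    (hβ : ∀ i j, β i j ∈ qFiltration q d 1) {v : Fin m → RatFunc K} {m₀ : ℕ}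
    (hv : ∀ r, v r ∈ qFiltration q d m₀) (i : ℕ) (r : Fin m) :
    (cvGamma D β)^[i] v r ∈ qFiltration q d (m₀ + i) := by
  induction i generalizing r with
  | zero => exact hv r
  | succ i ih =>
    rw [Function.iterate_succ_apply', cvGamma, Pi.sub_apply, ← add_assoc]
    refine sub_mem ?_ (D.apply_mem_qFiltration hqd hX (ih r))
    rw [add_comm, Matrix.mulVec, dotProduct]
    exact sum_mem fun j _ => mul_mem_qFiltration (hβ r j) (ih j)

theorem fromBlocks_mem_qFiltration {m k : ℕ} (hk : 1 ≤ k)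
    {C : Matrix (Fin k) (Fin k) (RatFunc K)}
    {α A : Matrix (Fin m) (Fin k) (RatFunc K)} {β : Matrix (Fin m) (Fin m) (RatFunc K)}
    (hM : ∀ i j, Matrix.fromBlocks C 0 α β i j ∈ qFiltration q d 1)
    (hA : ∀ r a, A r a ∈ qFiltration q d (k - 1)) (i j : Fin k ⊕ Fin m) :
    Matrix.fromBlocks C 0 (A * C + α - (β * A - A.map D)) β i j ∈ qFiltration q d k := by
  have lift : qFiltration q d 1 ≤ qFiltration q d k := qFiltration_mono hqd hk
  have hC : ∀ i j, C i j ∈ qFiltration q d 1 := fun i j => hM (.inl i) (.inl j)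
  have hβ : ∀ i j, β i j ∈ qFiltration q d 1 := fun i j => hM (.inr i) (.inr j)
  rcases i with i | i <;> rcases j with j | j
  · exact lift (hC i j)
  · exact zero_mem _
  · have hAC := Matrix.mul_apply_mem_qFiltration hA hC i j
    have hβA := Matrix.mul_apply_mem_qFiltration hβ hA i j
    have hDA := D.apply_mem_qFiltration hqd hX (hA i j)
    rw [Nat.sub_add_cancel hk] at hAC hDA
    rw [Nat.add_sub_cancel' hk] at hβA
    exact sub_mem (add_mem hAC (lift (hM (.inr i) (.inl j)))) (sub_mem hβA hDA)
  · exact lift (hβ i j)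

end EntryBounds

-- Columns and summation indices are `0`-based: the paper's `Γ^{i-1}(Col_{a+i}(α))` is
-- `Γ^[i] (α · ⟨a + 1 + i, _⟩)` here.
/-- Analysis of `DBZ²`: for `M = ((C, 0), (α, β))` in Shape (I) with `q M` of
degree `≤ d`, and `A` the matrix with columns
`Col_a(A) = − Σ_{i=1}^{k−a} Γ^{i−1}(Col_{a+i}(α))` (columns indexed from `0`
here), and `P = ((I, 0), (A, I))`: (1) `q^{k−1} A` has polynomial entries of
degree `≤ (k−1)d`; (2) `q^k·P[M]` has polynomial entries of degree `≤ k d`;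
(3) `P[M] = ((C, 0), (A C + α − Γ(A), β))` and all columns of the lower-left
block except the first one vanish, i.e. `P[M]` is in Shape (II). -/
theorem dbz_phase_two_analysis {K : Type*} [Field K] {n k : ℕ}
    (hk1 : 1 ≤ k)
    (der : RatFunc K → RatFunc K)
    (h_add : ∀ a b : RatFunc K, der (a + b) = der a + der b)
    (h_mul : ∀ a b : RatFunc K, der (a * b) = a * der b + der a * b)
    (h_X : der RatFunc.X = 1)
    (h_C : ∀ c : K, der (RatFunc.C c) = 0)
    (q : Polynomial K) (d : ℕ) (hqd : q.degree ≤ (d : WithBot ℕ))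
    (C : Matrix (Fin k) (Fin k) (RatFunc K)) (hC : IsCompanionMat C)
    (α : Matrix (Fin (n - k)) (Fin k) (RatFunc K))
    (β : Matrix (Fin (n - k)) (Fin (n - k)) (RatFunc K))
    (hM : ∀ i j : Fin k ⊕ Fin (n - k), ∃ p : Polynomial K,
      p.degree ≤ (d : WithBot ℕ) ∧
      algebraMap (Polynomial K) (RatFunc K) q * Matrix.fromBlocks C 0 α β i j
        = algebraMap (Polynomial K) (RatFunc K) p)
    (A : Matrix (Fin (n - k)) (Fin k) (RatFunc K))
    (hA : ∀ (r : Fin (n - k)) (a : Fin k),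
      A r a = - ∑ i : Fin (k - 1 - (a : ℕ)),
        (cvGamma der β)^[(i : ℕ)]
          (fun r' => α r' ⟨(a : ℕ) + 1 + (i : ℕ), by
            have h1 := i.isLt; have h2 := a.isLt; omega⟩) r) :
    (∀ (r : Fin (n - k)) (a : Fin k), ∃ p : Polynomial K,
      p.degree ≤ (((k - 1) * d : ℕ) : WithBot ℕ) ∧
      (algebraMap (Polynomial K) (RatFunc K) q) ^ (k - 1) * A r a
        = algebraMap (Polynomial K) (RatFunc K) p) ∧
    (∀ i j : Fin k ⊕ Fin (n - k), ∃ p : Polynomial K,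
      p.degree ≤ ((k * d : ℕ) : WithBot ℕ) ∧
      (algebraMap (Polynomial K) (RatFunc K) q) ^ k *
        ((blkUnitriang A * Matrix.fromBlocks C 0 α β + (blkUnitriang A).map der)
          * (blkUnitriang A)⁻¹) i j
        = algebraMap (Polynomial K) (RatFunc K) p) ∧
    ((blkUnitriang A * Matrix.fromBlocks C 0 α β + (blkUnitriang A).map der)
        * (blkUnitriang A)⁻¹
      = Matrix.fromBlocks C 0 (A * C + α - (β * A - A.map der)) β ∧
      ∀ (r : Fin (n - k)) (a : Fin k), 1 ≤ (a : ℕ) →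
        (A * C + α - (β * A - A.map der)) r a = 0) := by
  obtain ⟨D, rfl⟩ : ∃ D : Derivation K (RatFunc K) (RatFunc K), ⇑D = der :=
    ⟨RatFunc.derivationOfLeibniz der h_add h_mul h_C, rfl⟩
  have hM1 : ∀ i j, Matrix.fromBlocks C 0 α β i j ∈ qFiltration q d 1 :=
    fun i j => mem_qFiltration_one.2 (hM i j)
  have hA_mem : ∀ r a, A r a ∈ qFiltration q d (k - 1) := fun r a => by
    rw [hA]
    refine neg_mem (sum_mem fun i _ => qFiltration_mono hqd (by omega : 1 + (i : ℕ) ≤ k - 1) ?_)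
    exact iterate_cvGamma_mem_qFiltration hqd D h_X (fun i j => hM1 (.inr i) (.inr j))
      (fun r' => hM1 (.inr r') (.inl _)) i r
  refine ⟨hA_mem, fun i j => ?_, blkUnitriang_gauge D A C α β, fun r a ha => ?_⟩
  · rw [blkUnitriang_gauge]
    exact fromBlocks_mem_qFiltration hqd D h_X hk1 hM1 hA_mem i j
  · refine lowerLeft_col_eq_zero D hC (fun r a => ?_) r a ha
    rw [hA, sum_fin_iterate_col_eq_sum_range]
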